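/- Let G be a group, H a subgroup of index 2, and φ, φ′ : H → K× characters of the same finite order n > 2, and ε : G → K× a character, where K is a field. If Ind_H^G(φ) ≅ Ind_H^G(φ′) ⊗ ε, then the restriction of ε to H satisfies: ε|_H equals either φ′^{-1}φ or φ′^{-1}·(φ composed with conjugation by an element of G \ H); in particular the order of ε|_H divides n. -/
import Mathlib


open Matrix

/-- Lemma 4.3: if Ind_H^G(φ) ≅ Ind_H^G(φ') ⊗ ε for characters φ, φ'
of the index-2 subgroup H, both of order n > 2, then ε|_H is φ'⁻¹φ or φ'⁻¹·φ^σ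
(σ = conjugation by g₀ ∉ H); in particular the order of ε|_H divides n.
The induced representations are written explicitly in the standard basis. -/
theorem stmt_8 (K : Type) [Field K] (G : Type) [Group G] (H : Subgroup G)
    (hidx : H.index = 2) (g₀ : G) (hg₀ : g₀ ∉ H)
    (hconj : ∀ h : ↥H, g₀ * ↑h * g₀⁻¹ ∈ H) (hsq : g₀ * g₀ ∈ H)
    (n : ℕ) (hn : 2 < n)
    (φ φ' : ↥H →* Kˣ) (hφ : orderOf φ = n) (hφ' : orderOf φ' = n)
    (ε : G →* Kˣ) (ρ ρ' : G →* GL (Fin 2) K)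
    (hρdiag : ∀ h : ↥H, (ρ (h : G) : Matrix (Fin 2) (Fin 2) K) =
      Matrix.diagonal ![(φ h : K), (φ ⟨g₀ * ↑h * g₀⁻¹, hconj h⟩ : K)])
    (hρg₀ : (ρ g₀ : Matrix (Fin 2) (Fin 2) K) = !![0, (φ ⟨g₀ * g₀, hsq⟩ : K); 1, 0])
    (hρ'diag : ∀ h : ↥H, (ρ' (h : G) : Matrix (Fin 2) (Fin 2) K) =
      Matrix.diagonal ![(φ' h : K), (φ' ⟨g₀ * ↑h * g₀⁻¹, hconj h⟩ : K)])
    (hρ'g₀ : (ρ' g₀ : Matrix (Fin 2) (Fin 2) K) = !![0, (φ' ⟨g₀ * g₀, hsq⟩ : K); 1, 0])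
    (hiso : ∃ M : GL (Fin 2) K, ∀ g : G,
      (ρ g : Matrix (Fin 2) (Fin 2) K) =
        (M : Matrix (Fin 2) (Fin 2) K) * ((ε g : K) • (ρ' g : Matrix (Fin 2) (Fin 2) K)) *
          ((M⁻¹ : GL (Fin 2) K) : Matrix (Fin 2) (Fin 2) K)) :
    ((∀ h : ↥H, ε (h : G) = (φ' h)⁻¹ * φ h) ∨
     (∀ h : ↥H, ε (h : G) = (φ' h)⁻¹ * φ ⟨g₀ * ↑h * g₀⁻¹, hconj h⟩)) ∧
    ∀ h : ↥H, (ε (h : G)) ^ n = 1 := by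
  obtain ⟨M, hM⟩ := hiso
  -- entrywise equations for h ∈ H
  have key : ∀ (h : ↥H) (i j : Fin 2),
      (![(φ h : K), (φ ⟨g₀ * ↑h * g₀⁻¹, hconj h⟩ : K)] i) * (M : Matrix (Fin 2) (Fin 2) K) i j
        = (M : Matrix (Fin 2) (Fin 2) K) i j *
          ((ε h : K) * ![(φ' h : K), (φ' ⟨g₀ * ↑h * g₀⁻¹, hconj h⟩ : K)] j) := by
    intro h i j
    have e := hM (h : G)
    rw [hρdiag h, hρ'diag h] at e
    have hMinv : ((M⁻¹ : GL (Fin 2) K) : Matrix (Fin 2) (Fin 2) K) *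
        (M : Matrix (Fin 2) (Fin 2) K) = 1 := M.inv_mul
    have e2 : Matrix.diagonal ![(φ h : K), (φ ⟨g₀ * ↑h * g₀⁻¹, hconj h⟩ : K)] *
        (M : Matrix (Fin 2) (Fin 2) K)
        = (M : Matrix (Fin 2) (Fin 2) K) *
          ((ε h : K) • Matrix.diagonal ![(φ' h : K), (φ' ⟨g₀ * ↑h * g₀⁻¹, hconj h⟩ : K)]) := by
      rw [e, mul_assoc, hMinv, mul_one]
    have e3 := congrFun (congrFun e2 i) j
    rw [Matrix.diagonal_mul, Matrix.mul_smul, Matrix.smul_apply, Matrix.mul_diagonal] at e3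
    rw [e3, smul_eq_mul]
    ring
  have hφn : ∀ x : ↥H, (φ x : Kˣ) ^ n = 1 := by
    intro x
    have h1 : φ ^ n = 1 := hφ ▸ pow_orderOf_eq_one φ
    calc (φ x) ^ n = (φ ^ n) x := by simp
    _ = 1 := by rw [h1]; rfl
  have hφ'n : ∀ x : ↥H, (φ' x : Kˣ) ^ n = 1 := by
    intro x
    have h1 : φ' ^ n = 1 := hφ' ▸ pow_orderOf_eq_one φ'
    calc (φ' x) ^ n = (φ' ^ n) x := by simp
    _ = 1 := by rw [h1]; rfl
  have hdet : (M : Matrix (Fin 2) (Fin 2) K).det ≠ 0 := by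
    have : IsUnit (M : Matrix (Fin 2) (Fin 2) K).det :=
      (Matrix.isUnit_iff_isUnit_det _).mp M.isUnit
    exact this.ne_zero
  by_cases hc : (M : Matrix (Fin 2) (Fin 2) K) 0 0 = 0
  · -- antidiagonal case: second alternative
    have hm10 : (M : Matrix (Fin 2) (Fin 2) K) 1 0 ≠ 0 := by
      intro h0
      apply hdet
      rw [Matrix.det_fin_two, hc, h0]
      ring
    have hε : ∀ h : ↥H, ε (h : G) = (φ' h)⁻¹ * φ ⟨g₀ * ↑h * g₀⁻¹, hconj h⟩ := by
      intro h
      have k := key h 1 0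
      simp only [Matrix.cons_val_one, Matrix.head_cons, Matrix.cons_val_zero] at k
      have hK : (φ ⟨g₀ * ↑h * g₀⁻¹, hconj h⟩ : K) = (ε h : K) * (φ' h : K) :=
        mul_right_cancel₀ hm10 (by linear_combination k)
      have hU : (φ ⟨g₀ * ↑h * g₀⁻¹, hconj h⟩ : Kˣ) = ε (h : G) * φ' h :=
        Units.ext (by push_cast; exact hK)
      rw [hU, mul_comm (ε (h : G)) (φ' h), inv_mul_cancel_left]
    refine ⟨Or.inr hε, fun h => ?_⟩
    rw [hε h, mul_pow, inv_pow, hφ'n, hφn, inv_one, one_mul]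
  · -- diagonal case: first alternative
    have hε : ∀ h : ↥H, ε (h : G) = (φ' h)⁻¹ * φ h := by
      intro h
      have k := key h 0 0
      simp only [Matrix.cons_val_zero] at k
      have hK : (φ h : K) = (ε h : K) * (φ' h : K) :=
        mul_right_cancel₀ hc (by linear_combination k)
      have hU : (φ h : Kˣ) = ε (h : G) * φ' h :=
        Units.ext (by push_cast; exact hK)
      rw [hU, mul_comm (ε (h : G)) (φ' h), inv_mul_cancel_left]
    refine ⟨Or.inl hε, fun h => ?_⟩
    rw [hε h, mul_pow, inv_pow, hφ'n, hφn, inv_one, one_mul]
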